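/- arXiv:1904.05679 — 3 statements merged into one kernel-verified Lean document; each statement's English description precedes it below -/
import Mathlib

section
/- Let k, l, a, t be integers with 2 ≤ k ≤ l, a ≥ 1 and t ≥ 2. If 2·(2t + 1) = 2·k·l − k·(k − 1) (i.e., 2t+1 = kl − k(k−1)/2) and a·t = l + 1, then (k, l, a, t) = (2, 3, 2, 2) or (k, l, a, t) = (3, 6, 1, 7). (These correspond to the Gushel–Mukai fourfold X_2 ⊂ SGr(2,5) and to the hyperplane section X_1 ⊂ SGr(3,9).) -/
theorem symplectic_grassmannian_K3_numerology
    (k l a t : ℤ) (hk : 2 ≤ k) (hkl : k ≤ l) (ha : a ≥ 1) (ht : t ≥ 2)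
    (hdim : 2 * (2 * t + 1) = 2 * k * l - k * (k - 1))
    (hind : a * t = l + 1) :
    (k = 2 ∧ l = 3 ∧ a = 2 ∧ t = 2) ∨ (k = 3 ∧ l = 6 ∧ a = 1 ∧ t = 7) := by
  have h1 : t ≤ l + 1 := by nlinarith
  have hbound : 2 * k * l - k * (k - 1) ≤ 4 * l + 6 := by omega
  have hk4 : k ≤ 4 := by nlinarith [mul_nonneg (sub_nonneg.mpr hkl) (by linarith : (0:ℤ) ≤ k - 2)]
  interval_cases k
  · -- k = 2
    have ht' : t = l - 1 := by omega
    subst ht'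
    rcases eq_or_lt_of_le ha with h | h
    · exfalso; rw [← h] at hind; omega
    · have ha2 : 2 ≤ a := h
      have hl3 : l ≤ 3 := by nlinarith
      have : l = 3 := by omega
      subst this
      left
      refine ⟨rfl, rfl, by omega, by omega⟩
  · -- k = 3
    have hl6 : l ≤ 6 := by omega
    interval_cases l
    · omega
    · have : t = 4 := by omega
      subst this; omega
    · omega
    · have : t = 7 := by omega
      subst this
      right; exact ⟨rfl, rfl, by omega, rfl⟩
  · -- k = 4
    have : l ≤ 4 := by omega
    interval_cases l
    · omega
end

section
/- Let k, l, a, t be integers with 2 ≤ k ≤ l, a ≥ 1 and t ≥ 2. If 2t + 1 = k·l − k·(k − 1) and a·t = l − k + 2, then (k, l, a, t) = (3, 5, 1, 4) or (k, l, a, t) = (5, 5, 1, 2). (These correspond to the hyperplane sections X_1 ⊂ Ml(3,8) and X_1 ⊂ Ml(5,10) ≅ (P^1)^5.) -/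
theorem bisymplectic_grassmannian_K3_numerology
    (k l a t : ℤ) (hk : 2 ≤ k) (hkl : k ≤ l) (ha : a ≥ 1) (ht : t ≥ 2)
    (hdim : 2 * t + 1 = k * l - k * (k - 1))
    (hind : a * t = l - k + 2) :
    (k = 3 ∧ l = 5 ∧ a = 1 ∧ t = 4) ∨ (k = 5 ∧ l = 5 ∧ a = 1 ∧ t = 2) := by
  have hkey : (l - k + 1) * (a * k - 2) = a + 2 := by
    linear_combination 2 * hind - a * hdim
  have hm : 1 ≤ l - k + 1 := by omega
  have h2 : 2 ≤ a * k := by nlinarith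
  have h3 : a * k ≠ 2 := by
    intro h
    rw [h] at hkey
    simp at hkey
    omega
  have hak : 1 ≤ a * k - 2 := by omega
  have ha4 : a * k ≤ a + 4 := by
    nlinarith [mul_nonneg (by omega : (0:ℤ) ≤ l - k + 1 - 1) (by omega : (0:ℤ) ≤ a * k - 2)]
  have hk5 : k ≤ 5 := by nlinarith
  have haa : a ≤ 4 := by nlinarith
  have hml : l - k + 1 ≤ a + 2 := by
    nlinarith [mul_nonneg (by omega : (0:ℤ) ≤ l - k + 1 - 1) (by omega : (0:ℤ) ≤ a * k - 2 - 1)]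
  have hl : l ≤ 10 := by omega
  interval_cases a <;> interval_cases k <;> interval_cases l <;> omega
end

section
/- Let k, l, a, t be integers with 2 ≤ k ≤ l, a ≥ 1 and t ≥ 2. If 2·(2t + 1) = 2·k·l − k·(k + 1) (i.e., 2t+1 = kl − k(k+1)/2) and a·t = l − 1, then (k, l, a, t) = (3, 5, 1, 4). (This corresponds to the hyperplane section X_1 ⊂ OGr(3,8).) -/
theorem orthogonal_grassmannian_K3_numerology
    (k l a t : ℤ) (hk : 2 ≤ k) (hkl : k ≤ l) (ha : a ≥ 1) (ht : t ≥ 2)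
    (hdim : 2 * (2 * t + 1) = 2 * k * l - k * (k + 1))
    (hind : a * t = l - 1) :
    k = 3 ∧ l = 5 ∧ a = 1 ∧ t = 4 := by
  have hl : l = a * t + 1 := by linarith
  subst hl
  have key : t * (2 * a * k - 4) = k ^ 2 - k + 2 := by ring_nf; ring_nf at hdim; linarith
  have hk4 : k ≤ 4 := by nlinarith [key, mul_le_mul_of_nonneg_right hkl (by nlinarith : (0:ℤ) ≤ 2*a*k - 4), mul_pos (by linarith : (0:ℤ) < a) (by linarith : (0:ℤ) < t)]
  interval_cases k
  · -- k = 2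
    have ha2 : a ≤ 2 := by nlinarith
    interval_cases a <;> omega
  · -- k = 3
    have ha2 : a ≤ 1 := by nlinarith
    interval_cases a <;> omega
  · -- k = 4
    have ha2 : a ≤ 1 := by nlinarith
    interval_cases a <;> omega
end
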